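/- Well-definedness of the transition maps of the noncommutative K_{ℙ²}: the assignment G_{21} : x_1 ↦ s^{-2}t^{-1}·z_2^{-1}, y_1 ↦ s^{-1}t^{-2}·y_2 z_2^{-1}, w_1 ↦ s³t⁹·w_2 z_2³ preserves the three defining relations of 𝒜_1 and hence defines a unital K-algebra homomorphism 𝒜_1⟨x_1^{-1}⟩ → 𝒜_2⟨z_2^{-1}⟩ (with x_1^{-1} ↦ s²t·z_2); likewise G_{32} : y_2 ↦ s^{-2}t^{-1}·x_3^{-1}, z_2 ↦ s^{-1}t^{-2}·z_3 x_3^{-1}, w_2 ↦ s³t⁹·w_3 x_3³ defines a unital K-algebra homomorphism 𝒜_2⟨y_2^{-1}⟩ → 𝒜_3⟨x_3^{-1}⟩, and G_{13} : z_3 ↦ s^{-2}t^{-1}·y_1^{-1}, x_3 ↦ s^{-1}t^{-2}·x_1 y_1^{-1}, w_3 ↦ s³t⁹·w_1 y_1³ defines a unital K-algebra homomorphism 𝒜_3⟨z_3^{-1}⟩ → 𝒜_1⟨y_1^{-1}⟩. -/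

import Mathlib

/-! Statement 16: well-definedness of the transition maps of the noncommutative `K_{ℙ²}`. -/

/-- Generators `w₁, y₁, x₁` of `𝒜₁`, together with an adjoined inverse generator. -/
inductive G1 : Type
  | w1 | y1 | x1 | inv
deriving DecidableEq

/-- Generators `w₂, z₂, y₂` of `𝒜₂`, together with an adjoined inverse generator. -/
inductive G2 : Type
  | w2 | z2 | y2 | inv
deriving DecidableEq

/-- Generators `w₃, x₃, z₃` of `𝒜₃`, together with an adjoined inverse generator. -/
inductive G3 : Type
  | w3 | x3 | z3 | inv
deriving DecidableEq

/-- Relations of `𝒜₁⟨j⁻¹⟩ = K⟨w₁,y₁,x₁⟩/(y₁x₁ − t⁻³x₁y₁, x₁w₁ − t⁻³w₁x₁, w₁y₁ − t⁻³y₁w₁)`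
with the generator `j` inverted. -/
inductive Rel1 (K : Type) [CommRing K] (t : Kˣ) (j : G1) :
    FreeAlgebra K G1 → FreeAlgebra K G1 → Prop
  | ryx : Rel1 K t j (FreeAlgebra.ι K G1.y1 * FreeAlgebra.ι K G1.x1)
      ((((t⁻¹ : Kˣ) : K) ^ 3) • (FreeAlgebra.ι K G1.x1 * FreeAlgebra.ι K G1.y1))
  | rxw : Rel1 K t j (FreeAlgebra.ι K G1.x1 * FreeAlgebra.ι K G1.w1)
      ((((t⁻¹ : Kˣ) : K) ^ 3) • (FreeAlgebra.ι K G1.w1 * FreeAlgebra.ι K G1.x1))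
  | rwy : Rel1 K t j (FreeAlgebra.ι K G1.w1 * FreeAlgebra.ι K G1.y1)
      ((((t⁻¹ : Kˣ) : K) ^ 3) • (FreeAlgebra.ι K G1.y1 * FreeAlgebra.ι K G1.w1))
  | inv_left : Rel1 K t j (FreeAlgebra.ι K G1.inv * FreeAlgebra.ι K j) 1
  | inv_right : Rel1 K t j (FreeAlgebra.ι K j * FreeAlgebra.ι K G1.inv) 1

/-- Relations of `𝒜₂⟨j⁻¹⟩ = K⟨w₂,z₂,y₂⟩/(z₂y₂ − t⁻³y₂z₂, y₂w₂ − t⁻³w₂y₂, w₂z₂ − t⁻³z₂w₂)`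
with the generator `j` inverted. -/
inductive Rel2 (K : Type) [CommRing K] (t : Kˣ) (j : G2) :
    FreeAlgebra K G2 → FreeAlgebra K G2 → Prop
  | rzy : Rel2 K t j (FreeAlgebra.ι K G2.z2 * FreeAlgebra.ι K G2.y2)
      ((((t⁻¹ : Kˣ) : K) ^ 3) • (FreeAlgebra.ι K G2.y2 * FreeAlgebra.ι K G2.z2))
  | ryw : Rel2 K t j (FreeAlgebra.ι K G2.y2 * FreeAlgebra.ι K G2.w2)
      ((((t⁻¹ : Kˣ) : K) ^ 3) • (FreeAlgebra.ι K G2.w2 * FreeAlgebra.ι K G2.y2))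
  | rwz : Rel2 K t j (FreeAlgebra.ι K G2.w2 * FreeAlgebra.ι K G2.z2)
      ((((t⁻¹ : Kˣ) : K) ^ 3) • (FreeAlgebra.ι K G2.z2 * FreeAlgebra.ι K G2.w2))
  | inv_left : Rel2 K t j (FreeAlgebra.ι K G2.inv * FreeAlgebra.ι K j) 1
  | inv_right : Rel2 K t j (FreeAlgebra.ι K j * FreeAlgebra.ι K G2.inv) 1

/-- Relations of `𝒜₃⟨j⁻¹⟩ = K⟨w₃,x₃,z₃⟩/(x₃z₃ − t⁻³z₃x₃, z₃w₃ − t⁻³w₃z₃, w₃x₃ − t⁻³x₃w₃)`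
with the generator `j` inverted. -/
inductive Rel3 (K : Type) [CommRing K] (t : Kˣ) (j : G3) :
    FreeAlgebra K G3 → FreeAlgebra K G3 → Prop
  | rxz : Rel3 K t j (FreeAlgebra.ι K G3.x3 * FreeAlgebra.ι K G3.z3)
      ((((t⁻¹ : Kˣ) : K) ^ 3) • (FreeAlgebra.ι K G3.z3 * FreeAlgebra.ι K G3.x3))
  | rzw : Rel3 K t j (FreeAlgebra.ι K G3.z3 * FreeAlgebra.ι K G3.w3)
      ((((t⁻¹ : Kˣ) : K) ^ 3) • (FreeAlgebra.ι K G3.w3 * FreeAlgebra.ι K G3.z3))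
  | rwx : Rel3 K t j (FreeAlgebra.ι K G3.w3 * FreeAlgebra.ι K G3.x3)
      ((((t⁻¹ : Kˣ) : K) ^ 3) • (FreeAlgebra.ι K G3.x3 * FreeAlgebra.ι K G3.w3))
  | inv_left : Rel3 K t j (FreeAlgebra.ι K G3.inv * FreeAlgebra.ι K j) 1
  | inv_right : Rel3 K t j (FreeAlgebra.ι K j * FreeAlgebra.ι K G3.inv) 1

section

variable (K : Type) [CommRing K] (t : Kˣ)

/-- `𝒜₁⟨x₁⁻¹⟩`. -/
abbrev A1x := RingQuot (Rel1 K t G1.x1)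
/-- `𝒜₁⟨y₁⁻¹⟩`. -/
abbrev A1y := RingQuot (Rel1 K t G1.y1)
/-- `𝒜₂⟨z₂⁻¹⟩`. -/
abbrev A2z := RingQuot (Rel2 K t G2.z2)
/-- `𝒜₂⟨y₂⁻¹⟩`. -/
abbrev A2y := RingQuot (Rel2 K t G2.y2)
/-- `𝒜₃⟨x₃⁻¹⟩`. -/
abbrev A3x := RingQuot (Rel3 K t G3.x3)
/-- `𝒜₃⟨z₃⁻¹⟩`. -/
abbrev A3z := RingQuot (Rel3 K t G3.z3)

end

/-- image of a generator in a localization of `𝒜₁`. -/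
def el1 (K : Type) [CommRing K] (t : Kˣ) (j : G1) (g : G1) : RingQuot (Rel1 K t j) :=
  RingQuot.mkAlgHom K (Rel1 K t j) (FreeAlgebra.ι K g)

/-- image of a generator in a localization of `𝒜₂`. -/
def el2 (K : Type) [CommRing K] (t : Kˣ) (j : G2) (g : G2) : RingQuot (Rel2 K t j) :=
  RingQuot.mkAlgHom K (Rel2 K t j) (FreeAlgebra.ι K g)

/-- image of a generator in a localization of `𝒜₃`. -/
def el3 (K : Type) [CommRing K] (t : Kˣ) (j : G3) (g : G3) : RingQuot (Rel3 K t j) :=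
  RingQuot.mkAlgHom K (Rel3 K t j) (FreeAlgebra.ι K g)

/-!
All defining relations, in the source algebras and among the proposed images, are
`q`-commutation relations `a * b = c • (b * a)` with `c = t⁻³`. Such relations are
multiplicative in each argument (the factors multiply), insensitive to scalars, and pass to
inverses of units, so the images `z⁻¹`, `y z⁻¹`, `w z³` `q`-commute with factors read off from
the relations among `w, y, z`. For `w z³` against `y z⁻¹` the factor is `c⁻² · c³ = c`, which
is what forces the exponent in `w ↦ w z³`. The three maps are the same computation under the
cyclic relabelling `1 → 2 → 3`.
-/

def QCommute {K A : Type*} [CommSemiring K] [Semiring A] [Algebra K A] (q : K) (a b : A) :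
    Prop :=
  a * b = q • (b * a)

namespace QCommute

variable {K A : Type*} [CommSemiring K] [Semiring A] [Algebra K A] {q r : K} {a b c : A}

theorem of_commute (h : Commute a b) : QCommute (1 : K) a b := by
  rw [QCommute, one_smul]
  exact h.eq

theorem smul (h : QCommute q a b) (α β : K) : QCommute q (α • a) (β • b) := by
  rw [QCommute, smul_mul_smul_comm, h, smul_mul_smul_comm, smul_comm, mul_comm α]

theorem mul_left (ha : QCommute q a c) (hb : QCommute r b c) : QCommute (q * r) (a * b) c := by
  rw [QCommute, mul_assoc, hb, mul_smul_comm, ← mul_assoc, ha, smul_mul_assoc, smul_smul,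
    mul_comm r, mul_assoc]

theorem mul_right (hb : QCommute q a b) (hc : QCommute r a c) : QCommute (q * r) a (b * c) := by
  rw [QCommute, ← mul_assoc, hb, smul_mul_assoc, mul_assoc, hc, mul_smul_comm, smul_smul,
    mul_assoc]

theorem pow_left (h : QCommute q a b) : ∀ n : ℕ, QCommute (q ^ n) (a ^ n) b
  | 0 => by simpa only [pow_zero] using of_commute (Commute.one_left b)
  | n + 1 => by simpa only [pow_succ] using (h.pow_left n).mul_left h

theorem symm {q : Kˣ} (h : QCommute (q : K) a b) : QCommute ((q⁻¹ : Kˣ) : K) b a := by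
  rw [QCommute, h, smul_smul, Units.inv_mul, one_smul]

theorem units_inv_right {u : Aˣ} (h : QCommute q a u) : QCommute q (↑u⁻¹ : A) a :=
  calc (↑u⁻¹ * a : A) = ↑u⁻¹ * (a * u) * ↑u⁻¹ := by
        rw [mul_assoc, mul_assoc, Units.mul_inv, mul_one]
    _ = q • (a * ↑u⁻¹) := by
        rw [h, mul_smul_comm, smul_mul_assoc, ← mul_assoc, Units.inv_mul, one_mul]

theorem units_inv_left {u : Aˣ} (h : QCommute q (u : A) a) : QCommute q a (↑u⁻¹ : A) :=
  calc (a * ↑u⁻¹ : A) = ↑u⁻¹ * (u * a) * ↑u⁻¹ := by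
        rw [← mul_assoc, Units.inv_mul, one_mul]
    _ = q • (↑u⁻¹ * a) := by
        rw [h, mul_smul_comm, smul_mul_assoc, mul_assoc, mul_assoc, Units.mul_inv, mul_one]

end QCommute

theorem qCommute_transition {K A : Type*} [CommSemiring K] [Semiring A] [Algebra K A]
    {c : Kˣ} {w y : A} {z : Aˣ} (hzy : QCommute (c : K) (z : A) y) (hyw : QCommute (c : K) y w)
    (hwz : QCommute (c : K) w z) :
    QCommute (c : K) (y * ↑z⁻¹) (↑z⁻¹ : A) ∧ QCommute (c : K) (↑z⁻¹ : A) (w * z ^ 3) ∧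
      QCommute (c : K) (w * z ^ 3) (y * ↑z⁻¹) := by
  have hzz : Commute (z : A) ↑z⁻¹ := Commute.units_inv_right (Commute.refl (z : A))
  have hzw : QCommute (c : K) (↑z⁻¹ : A) w := hwz.units_inv_right
  refine ⟨?_, ?_, ?_⟩
  · simpa only [mul_one] using
      hzy.units_inv_left.mul_left (QCommute.of_commute (Commute.refl (↑z⁻¹ : A)))
  · simpa only [mul_one] using hzw.mul_right (QCommute.of_commute (hzz.symm.pow_right 3))
  · have hw : QCommute (((c⁻¹ : Kˣ) : K) * ((c⁻¹ : Kˣ) : K)) w (y * ↑z⁻¹) :=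
      hyw.symm.mul_right hzw.symm
    have hz : QCommute ((c : K) ^ 3) ((z : A) ^ 3) (y * ↑z⁻¹) := by
      simpa only [mul_one] using (hzy.mul_right (QCommute.of_commute hzz)).pow_left 3
    have hc : ((c⁻¹ : Kˣ) : K) * ((c⁻¹ : Kˣ) : K) * (c : K) ^ 3 = c := by
      rw [← Units.val_pow_eq_pow_val, ← Units.val_mul, ← Units.val_mul]
      congr 1
      group
    simpa only [hc] using hw.mul_left hz

theorem smul_units_mul_smul_inv_eq_one {K A : Type*} [CommSemiring K] [Semiring A] [Algebra K A]
    {δ α : K} (h : δ * α = 1) (u : Aˣ) :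
    (δ • (u : A)) * (α • (↑u⁻¹ : A)) = 1 ∧ (α • (↑u⁻¹ : A)) * (δ • (u : A)) = 1 := by
  rw [smul_mul_smul_comm, smul_mul_smul_comm, mul_comm α, h, Units.mul_inv, Units.inv_mul,
    one_smul]
  exact ⟨rfl, rfl⟩

namespace RingQuot

variable {K G : Type*} [CommSemiring K] {r : FreeAlgebra K G → FreeAlgebra K G → Prop}

theorem qCommute_mkAlgHom_ι {q : K} {g h : G}
    (hr : r (FreeAlgebra.ι K g * FreeAlgebra.ι K h)
      (q • (FreeAlgebra.ι K h * FreeAlgebra.ι K g))) :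
    QCommute q (mkAlgHom K r (FreeAlgebra.ι K g)) (mkAlgHom K r (FreeAlgebra.ι K h)) := by
  simpa only [QCommute, map_mul, map_smul] using mkAlgHom_rel K hr

def unitOfRel {g g' : G} (h : r (FreeAlgebra.ι K g * FreeAlgebra.ι K g') 1)
    (h' : r (FreeAlgebra.ι K g' * FreeAlgebra.ι K g) 1) : (RingQuot r)ˣ where
  val := mkAlgHom K r (FreeAlgebra.ι K g)
  inv := mkAlgHom K r (FreeAlgebra.ι K g')
  val_inv := by simpa only [map_mul, map_one] using mkAlgHom_rel K h
  inv_val := by simpa only [map_mul, map_one] using mkAlgHom_rel K h'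

theorem exists_algHom_mkAlgHom_ι {B : Type*} [Semiring B] [Algebra K B] (f : G → B)
    (hf : ∀ ⦃a b⦄, r a b → FreeAlgebra.lift K f a = FreeAlgebra.lift K f b) :
    ∃ φ : RingQuot r →ₐ[K] B, ∀ g, φ (mkAlgHom K r (FreeAlgebra.ι K g)) = f g :=
  ⟨liftAlgHom K ⟨FreeAlgebra.lift K f, hf⟩, fun g => by
    rw [liftAlgHom_mkAlgHom_apply, FreeAlgebra.lift_ι_apply]⟩

end RingQuot

section Presentations

variable (K : Type) [CommRing K] (t : Kˣ)

theorem el1_qCommute (j : G1) :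
    QCommute (((t⁻¹ : Kˣ) : K) ^ 3) (el1 K t j .y1) (el1 K t j .x1) ∧
      QCommute (((t⁻¹ : Kˣ) : K) ^ 3) (el1 K t j .x1) (el1 K t j .w1) ∧
      QCommute (((t⁻¹ : Kˣ) : K) ^ 3) (el1 K t j .w1) (el1 K t j .y1) :=
  ⟨RingQuot.qCommute_mkAlgHom_ι .ryx, RingQuot.qCommute_mkAlgHom_ι .rxw,
    RingQuot.qCommute_mkAlgHom_ι .rwy⟩

theorem el2_qCommute (j : G2) :
    QCommute (((t⁻¹ : Kˣ) : K) ^ 3) (el2 K t j .z2) (el2 K t j .y2) ∧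
      QCommute (((t⁻¹ : Kˣ) : K) ^ 3) (el2 K t j .y2) (el2 K t j .w2) ∧
      QCommute (((t⁻¹ : Kˣ) : K) ^ 3) (el2 K t j .w2) (el2 K t j .z2) :=
  ⟨RingQuot.qCommute_mkAlgHom_ι .rzy, RingQuot.qCommute_mkAlgHom_ι .ryw,
    RingQuot.qCommute_mkAlgHom_ι .rwz⟩

theorem el3_qCommute (j : G3) :
    QCommute (((t⁻¹ : Kˣ) : K) ^ 3) (el3 K t j .x3) (el3 K t j .z3) ∧
      QCommute (((t⁻¹ : Kˣ) : K) ^ 3) (el3 K t j .z3) (el3 K t j .w3) ∧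
      QCommute (((t⁻¹ : Kˣ) : K) ^ 3) (el3 K t j .w3) (el3 K t j .x3) :=
  ⟨RingQuot.qCommute_mkAlgHom_ι .rxz, RingQuot.qCommute_mkAlgHom_ι .rzw,
    RingQuot.qCommute_mkAlgHom_ι .rwx⟩

def el1Unit (j : G1) : (RingQuot (Rel1 K t j))ˣ := RingQuot.unitOfRel .inv_right .inv_left

def el2Unit (j : G2) : (RingQuot (Rel2 K t j))ˣ := RingQuot.unitOfRel .inv_right .inv_left

def el3Unit (j : G3) : (RingQuot (Rel3 K t j))ˣ := RingQuot.unitOfRel .inv_right .inv_left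

variable {K t} {B : Type*} [Semiring B] [Algebra K B]

theorem exists_algHom_A1x {x y w x' : B} (hyx : QCommute (((t⁻¹ : Kˣ) : K) ^ 3) y x)
    (hxw : QCommute (((t⁻¹ : Kˣ) : K) ^ 3) x w) (hwy : QCommute (((t⁻¹ : Kˣ) : K) ^ 3) w y)
    (hxx' : x * x' = 1) (hx'x : x' * x = 1) :
    ∃ G : A1x K t →ₐ[K] B, G (el1 K t .x1 .x1) = x ∧ G (el1 K t .x1 .y1) = y ∧
      G (el1 K t .x1 .w1) = w ∧ G (el1 K t .x1 .inv) = x' := by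
  obtain ⟨G, hG⟩ := RingQuot.exists_algHom_mkAlgHom_ι (r := Rel1 K t .x1)
    (fun | .w1 => w | .y1 => y | .x1 => x | .inv => x') (by
      intro a b h
      cases h <;> simp only [map_mul, map_smul, map_one, FreeAlgebra.lift_ι_apply] <;> assumption)
  exact ⟨G, hG .x1, hG .y1, hG .w1, hG .inv⟩

theorem exists_algHom_A2y {y z w y' : B} (hzy : QCommute (((t⁻¹ : Kˣ) : K) ^ 3) z y)
    (hyw : QCommute (((t⁻¹ : Kˣ) : K) ^ 3) y w) (hwz : QCommute (((t⁻¹ : Kˣ) : K) ^ 3) w z)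
    (hyy' : y * y' = 1) (hy'y : y' * y = 1) :
    ∃ G : A2y K t →ₐ[K] B, G (el2 K t .y2 .y2) = y ∧ G (el2 K t .y2 .z2) = z ∧
      G (el2 K t .y2 .w2) = w ∧ G (el2 K t .y2 .inv) = y' := by
  obtain ⟨G, hG⟩ := RingQuot.exists_algHom_mkAlgHom_ι (r := Rel2 K t .y2)
    (fun | .w2 => w | .z2 => z | .y2 => y | .inv => y') (by
      intro a b h
      cases h <;> simp only [map_mul, map_smul, map_one, FreeAlgebra.lift_ι_apply] <;> assumption)
  exact ⟨G, hG .y2, hG .z2, hG .w2, hG .inv⟩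

theorem exists_algHom_A3z {z x w z' : B} (hxz : QCommute (((t⁻¹ : Kˣ) : K) ^ 3) x z)
    (hzw : QCommute (((t⁻¹ : Kˣ) : K) ^ 3) z w) (hwx : QCommute (((t⁻¹ : Kˣ) : K) ^ 3) w x)
    (hzz' : z * z' = 1) (hz'z : z' * z = 1) :
    ∃ G : A3z K t →ₐ[K] B, G (el3 K t .z3 .z3) = z ∧ G (el3 K t .z3 .x3) = x ∧
      G (el3 K t .z3 .w3) = w ∧ G (el3 K t .z3 .inv) = z' := by
  obtain ⟨G, hG⟩ := RingQuot.exists_algHom_mkAlgHom_ι (r := Rel3 K t .z3)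
    (fun | .w3 => w | .x3 => x | .z3 => z | .inv => z') (by
      intro a b h
      cases h <;> simp only [map_mul, map_smul, map_one, FreeAlgebra.lift_ι_apply] <;> assumption)
  exact ⟨G, hG .z3, hG .x3, hG .w3, hG .inv⟩

end Presentations

/-- Well-definedness of the transition maps of the noncommutative `K_{ℙ²}`:
`G₂₁ : x₁ ↦ s⁻²t⁻¹·z₂⁻¹, y₁ ↦ s⁻¹t⁻²·y₂z₂⁻¹, w₁ ↦ s³t⁹·w₂z₂³` preserves the three defining
relations of `𝒜₁` and defines a unital `K`-algebra homomorphism `𝒜₁⟨x₁⁻¹⟩ → 𝒜₂⟨z₂⁻¹⟩`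
(with `x₁⁻¹ ↦ s²t·z₂`); likewise for `G₃₂ : 𝒜₂⟨y₂⁻¹⟩ → 𝒜₃⟨x₃⁻¹⟩` and
`G₁₃ : 𝒜₃⟨z₃⁻¹⟩ → 𝒜₁⟨y₁⁻¹⟩`. -/
theorem nc_KP2_transition_maps (K : Type) [CommRing K] (s t : Kˣ) :
    -- G₂₁ : 𝒜₁⟨x₁⁻¹⟩ → 𝒜₂⟨z₂⁻¹⟩
    ((((((s⁻¹ : Kˣ) : K) ^ 1 * ((t⁻¹ : Kˣ) : K) ^ 2) • (el2 K t G2.z2 G2.y2 * el2 K t G2.z2 G2.inv))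
        * ((((s⁻¹ : Kˣ) : K) ^ 2 * ((t⁻¹ : Kˣ) : K)) • el2 K t G2.z2 G2.inv)
        = (((t⁻¹ : Kˣ) : K) ^ 3) •
            (((((s⁻¹ : Kˣ) : K) ^ 2 * ((t⁻¹ : Kˣ) : K)) • el2 K t G2.z2 G2.inv)
              * ((((s⁻¹ : Kˣ) : K) ^ 1 * ((t⁻¹ : Kˣ) : K) ^ 2) •
                  (el2 K t G2.z2 G2.y2 * el2 K t G2.z2 G2.inv))))
      ∧ (((((s⁻¹ : Kˣ) : K) ^ 2 * ((t⁻¹ : Kˣ) : K)) • el2 K t G2.z2 G2.inv)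
          * ((((s : Kˣ) : K) ^ 3 * ((t : Kˣ) : K) ^ 9) •
              (el2 K t G2.z2 G2.w2 * el2 K t G2.z2 G2.z2 ^ 3))
        = (((t⁻¹ : Kˣ) : K) ^ 3) •
            (((((s : Kˣ) : K) ^ 3 * ((t : Kˣ) : K) ^ 9) •
                (el2 K t G2.z2 G2.w2 * el2 K t G2.z2 G2.z2 ^ 3))
              * ((((s⁻¹ : Kˣ) : K) ^ 2 * ((t⁻¹ : Kˣ) : K)) • el2 K t G2.z2 G2.inv)))
      ∧ (((((s : Kˣ) : K) ^ 3 * ((t : Kˣ) : K) ^ 9) •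
            (el2 K t G2.z2 G2.w2 * el2 K t G2.z2 G2.z2 ^ 3))
          * ((((s⁻¹ : Kˣ) : K) ^ 1 * ((t⁻¹ : Kˣ) : K) ^ 2) •
              (el2 K t G2.z2 G2.y2 * el2 K t G2.z2 G2.inv))
        = (((t⁻¹ : Kˣ) : K) ^ 3) •
            (((((s⁻¹ : Kˣ) : K) ^ 1 * ((t⁻¹ : Kˣ) : K) ^ 2) •
                (el2 K t G2.z2 G2.y2 * el2 K t G2.z2 G2.inv))
              * ((((s : Kˣ) : K) ^ 3 * ((t : Kˣ) : K) ^ 9) •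
                  (el2 K t G2.z2 G2.w2 * el2 K t G2.z2 G2.z2 ^ 3))))
      ∧ ∃ G : A1x K t →ₐ[K] A2z K t,
          G (el1 K t G1.x1 G1.x1)
              = (((s⁻¹ : Kˣ) : K) ^ 2 * ((t⁻¹ : Kˣ) : K)) • el2 K t G2.z2 G2.inv
          ∧ G (el1 K t G1.x1 G1.y1)
              = (((s⁻¹ : Kˣ) : K) ^ 1 * ((t⁻¹ : Kˣ) : K) ^ 2) •
                  (el2 K t G2.z2 G2.y2 * el2 K t G2.z2 G2.inv)
          ∧ G (el1 K t G1.x1 G1.w1)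
              = (((s : Kˣ) : K) ^ 3 * ((t : Kˣ) : K) ^ 9) •
                  (el2 K t G2.z2 G2.w2 * el2 K t G2.z2 G2.z2 ^ 3)
          ∧ G (el1 K t G1.x1 G1.inv)
              = (((s : Kˣ) : K) ^ 2 * ((t : Kˣ) : K)) • el2 K t G2.z2 G2.z2)
    -- G₃₂ : 𝒜₂⟨y₂⁻¹⟩ → 𝒜₃⟨x₃⁻¹⟩
    ∧ ((((((s⁻¹ : Kˣ) : K) ^ 1 * ((t⁻¹ : Kˣ) : K) ^ 2) • (el3 K t G3.x3 G3.z3 * el3 K t G3.x3 G3.inv))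
        * ((((s⁻¹ : Kˣ) : K) ^ 2 * ((t⁻¹ : Kˣ) : K)) • el3 K t G3.x3 G3.inv)
        = (((t⁻¹ : Kˣ) : K) ^ 3) •
            (((((s⁻¹ : Kˣ) : K) ^ 2 * ((t⁻¹ : Kˣ) : K)) • el3 K t G3.x3 G3.inv)
              * ((((s⁻¹ : Kˣ) : K) ^ 1 * ((t⁻¹ : Kˣ) : K) ^ 2) •
                  (el3 K t G3.x3 G3.z3 * el3 K t G3.x3 G3.inv))))
      ∧ (((((s⁻¹ : Kˣ) : K) ^ 2 * ((t⁻¹ : Kˣ) : K)) • el3 K t G3.x3 G3.inv)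
          * ((((s : Kˣ) : K) ^ 3 * ((t : Kˣ) : K) ^ 9) •
              (el3 K t G3.x3 G3.w3 * el3 K t G3.x3 G3.x3 ^ 3))
        = (((t⁻¹ : Kˣ) : K) ^ 3) •
            (((((s : Kˣ) : K) ^ 3 * ((t : Kˣ) : K) ^ 9) •
                (el3 K t G3.x3 G3.w3 * el3 K t G3.x3 G3.x3 ^ 3))
              * ((((s⁻¹ : Kˣ) : K) ^ 2 * ((t⁻¹ : Kˣ) : K)) • el3 K t G3.x3 G3.inv)))
      ∧ (((((s : Kˣ) : K) ^ 3 * ((t : Kˣ) : K) ^ 9) •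
            (el3 K t G3.x3 G3.w3 * el3 K t G3.x3 G3.x3 ^ 3))
          * ((((s⁻¹ : Kˣ) : K) ^ 1 * ((t⁻¹ : Kˣ) : K) ^ 2) •
              (el3 K t G3.x3 G3.z3 * el3 K t G3.x3 G3.inv))
        = (((t⁻¹ : Kˣ) : K) ^ 3) •
            (((((s⁻¹ : Kˣ) : K) ^ 1 * ((t⁻¹ : Kˣ) : K) ^ 2) •
                (el3 K t G3.x3 G3.z3 * el3 K t G3.x3 G3.inv))
              * ((((s : Kˣ) : K) ^ 3 * ((t : Kˣ) : K) ^ 9) •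
                  (el3 K t G3.x3 G3.w3 * el3 K t G3.x3 G3.x3 ^ 3))))
      ∧ ∃ G : A2y K t →ₐ[K] A3x K t,
          G (el2 K t G2.y2 G2.y2)
              = (((s⁻¹ : Kˣ) : K) ^ 2 * ((t⁻¹ : Kˣ) : K)) • el3 K t G3.x3 G3.inv
          ∧ G (el2 K t G2.y2 G2.z2)
              = (((s⁻¹ : Kˣ) : K) ^ 1 * ((t⁻¹ : Kˣ) : K) ^ 2) •
                  (el3 K t G3.x3 G3.z3 * el3 K t G3.x3 G3.inv)
          ∧ G (el2 K t G2.y2 G2.w2)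
              = (((s : Kˣ) : K) ^ 3 * ((t : Kˣ) : K) ^ 9) •
                  (el3 K t G3.x3 G3.w3 * el3 K t G3.x3 G3.x3 ^ 3)
          ∧ G (el2 K t G2.y2 G2.inv)
              = (((s : Kˣ) : K) ^ 2 * ((t : Kˣ) : K)) • el3 K t G3.x3 G3.x3)
    -- G₁₃ : 𝒜₃⟨z₃⁻¹⟩ → 𝒜₁⟨y₁⁻¹⟩
    ∧ ((((((s⁻¹ : Kˣ) : K) ^ 1 * ((t⁻¹ : Kˣ) : K) ^ 2) • (el1 K t G1.y1 G1.x1 * el1 K t G1.y1 G1.inv))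
        * ((((s⁻¹ : Kˣ) : K) ^ 2 * ((t⁻¹ : Kˣ) : K)) • el1 K t G1.y1 G1.inv)
        = (((t⁻¹ : Kˣ) : K) ^ 3) •
            (((((s⁻¹ : Kˣ) : K) ^ 2 * ((t⁻¹ : Kˣ) : K)) • el1 K t G1.y1 G1.inv)
              * ((((s⁻¹ : Kˣ) : K) ^ 1 * ((t⁻¹ : Kˣ) : K) ^ 2) •
                  (el1 K t G1.y1 G1.x1 * el1 K t G1.y1 G1.inv))))
      ∧ (((((s⁻¹ : Kˣ) : K) ^ 2 * ((t⁻¹ : Kˣ) : K)) • el1 K t G1.y1 G1.inv)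
          * ((((s : Kˣ) : K) ^ 3 * ((t : Kˣ) : K) ^ 9) •
              (el1 K t G1.y1 G1.w1 * el1 K t G1.y1 G1.y1 ^ 3))
        = (((t⁻¹ : Kˣ) : K) ^ 3) •
            (((((s : Kˣ) : K) ^ 3 * ((t : Kˣ) : K) ^ 9) •
                (el1 K t G1.y1 G1.w1 * el1 K t G1.y1 G1.y1 ^ 3))
              * ((((s⁻¹ : Kˣ) : K) ^ 2 * ((t⁻¹ : Kˣ) : K)) • el1 K t G1.y1 G1.inv)))
      ∧ (((((s : Kˣ) : K) ^ 3 * ((t : Kˣ) : K) ^ 9) •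
            (el1 K t G1.y1 G1.w1 * el1 K t G1.y1 G1.y1 ^ 3))
          * ((((s⁻¹ : Kˣ) : K) ^ 1 * ((t⁻¹ : Kˣ) : K) ^ 2) •
              (el1 K t G1.y1 G1.x1 * el1 K t G1.y1 G1.inv))
        = (((t⁻¹ : Kˣ) : K) ^ 3) •
            (((((s⁻¹ : Kˣ) : K) ^ 1 * ((t⁻¹ : Kˣ) : K) ^ 2) •
                (el1 K t G1.y1 G1.x1 * el1 K t G1.y1 G1.inv))
              * ((((s : Kˣ) : K) ^ 3 * ((t : Kˣ) : K) ^ 9) •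
                  (el1 K t G1.y1 G1.w1 * el1 K t G1.y1 G1.y1 ^ 3))))
      ∧ ∃ G : A3z K t →ₐ[K] A1y K t,
          G (el3 K t G3.z3 G3.z3)
              = (((s⁻¹ : Kˣ) : K) ^ 2 * ((t⁻¹ : Kˣ) : K)) • el1 K t G1.y1 G1.inv
          ∧ G (el3 K t G3.z3 G3.x3)
              = (((s⁻¹ : Kˣ) : K) ^ 1 * ((t⁻¹ : Kˣ) : K) ^ 2) •
                  (el1 K t G1.y1 G1.x1 * el1 K t G1.y1 G1.inv)
          ∧ G (el3 K t G3.z3 G3.w3)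
              = (((s : Kˣ) : K) ^ 3 * ((t : Kˣ) : K) ^ 9) •
                  (el1 K t G1.y1 G1.w1 * el1 K t G1.y1 G1.y1 ^ 3)
          ∧ G (el3 K t G3.z3 G3.inv)
              = (((s : Kˣ) : K) ^ 2 * ((t : Kˣ) : K)) • el1 K t G1.y1 G1.y1) := by
  have hst : (((s : Kˣ) : K) ^ 2 * ((t : Kˣ) : K)) * (((s⁻¹ : Kˣ) : K) ^ 2 * ((t⁻¹ : Kˣ) : K))
      = 1 := by
    rw [mul_mul_mul_comm, ← mul_pow, Units.mul_inv, Units.mul_inv, one_pow, one_mul]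
  refine ⟨?_, ?_, ?_⟩
  · obtain ⟨hzy, hyw, hwz⟩ := el2_qCommute K t .z2
    obtain ⟨h₁, h₂, h₃⟩ := qCommute_transition (c := t⁻¹ ^ 3) (z := el2Unit K t .z2) hzy hyw hwz
    obtain ⟨hl, hr⟩ := smul_units_mul_smul_inv_eq_one hst (el2Unit K t .z2)
    exact ⟨h₁.smul _ _, h₂.smul _ _, h₃.smul _ _,
      exists_algHom_A1x (h₁.smul _ _) (h₂.smul _ _) (h₃.smul _ _) hr hl⟩
  · obtain ⟨hzy, hyw, hwz⟩ := el3_qCommute K t .x3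
    obtain ⟨h₁, h₂, h₃⟩ := qCommute_transition (c := t⁻¹ ^ 3) (z := el3Unit K t .x3) hzy hyw hwz
    obtain ⟨hl, hr⟩ := smul_units_mul_smul_inv_eq_one hst (el3Unit K t .x3)
    exact ⟨h₁.smul _ _, h₂.smul _ _, h₃.smul _ _,
      exists_algHom_A2y (h₁.smul _ _) (h₂.smul _ _) (h₃.smul _ _) hr hl⟩
  · obtain ⟨hzy, hyw, hwz⟩ := el1_qCommute K t .y1
    obtain ⟨h₁, h₂, h₃⟩ := qCommute_transition (c := t⁻¹ ^ 3) (z := el1Unit K t .y1) hzy hyw hwz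
    obtain ⟨hl, hr⟩ := smul_units_mul_smul_inv_eq_one hst (el1Unit K t .y1)
    exact ⟨h₁.smul _ _, h₂.smul _ _, h₃.smul _ _,
      exists_algHom_A3z (h₁.smul _ _) (h₂.smul _ _) (h₃.smul _ _) hr hl⟩
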